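/- Let V be a finite ground set, f : 2^V → ℝ a monotone, nonnegative, submodular set function, d ≥ 1 an integer, c_1, …, c_d cost functions on V, and define c(e) = max_{1 ≤ a ≤ d} c_a(e) for each e ∈ V, extended to sets by summation. Let K, τ > 0, let O ⊆ V satisfy c_a(O) ≤ K for every 1 ≤ a ≤ d, let B ⊆ V, let X ⊆ O be such that f(B ∪ {e}) − f(B) ≤ (τ/(K(1 + 2d)))·c(e) for every e ∈ X, and let Y = O ∖ X. Then f(Y) ≥ f(O) − f(B) − dτ/(1 + 2d). -/
import Mathlib

private lemma sum_marg_bound {V : Type*} [DecidableEq V]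
    (f : Finset V → ℝ)
    (hsub : ∀ S T : Finset V, S ⊆ T → ∀ e : V,
      f (S ∪ {e}) - f S ≥ f (T ∪ {e}) - f T)
    (B : Finset V) :
    ∀ (X S : Finset V), B ⊆ S →
      f (S ∪ X) ≤ f S + ∑ e ∈ X, (f (B ∪ {e}) - f B) := by
  intro X
  induction X using Finset.induction with
  | empty => intro S _; simp
  | @insert a X' ha ih =>
    intro S hBS
    have h1 : S ∪ insert a X' = (S ∪ X') ∪ {a} := by
      ext x; simp [or_comm, or_assoc, or_left_comm]
    rw [h1, Finset.sum_insert ha]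
    have h2 := hsub B (S ∪ X') (hBS.trans Finset.subset_union_left) a
    have h3 := ih S hBS
    linarith

private lemma marg_mono {V : Type*} [DecidableEq V]
    (f : Finset V → ℝ)
    (hsub : ∀ S T : Finset V, S ⊆ T → ∀ e : V,
      f (S ∪ {e}) - f S ≥ f (T ∪ {e}) - f T) :
    ∀ (X S T : Finset V), T ⊆ S → f (S ∪ X) - f S ≤ f (T ∪ X) - f T := by
  intro X
  induction X using Finset.induction with
  | empty => intro S T _; simp
  | @insert a X' ha ih =>
    intro S T hTS
    have h1 : S ∪ insert a X' = (S ∪ X') ∪ {a} := by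
      ext x; simp [or_comm, or_assoc, or_left_comm]
    have h2 : T ∪ insert a X' = (T ∪ X') ∪ {a} := by
      ext x; simp [or_comm, or_assoc, or_left_comm]
    rw [h1, h2]
    have h3 := hsub (T ∪ X') (S ∪ X') (Finset.union_subset_union hTS (le_refl X')) a
    have h4 := ih S T hTS
    linarith

/-- Multi-knapsack last-bucket lemma. With `d ≥ 1` cost functions,
`c(e) = max_a c_a(e)`, `O` feasible for all `d` knapsacks with budget `K`, and `X ⊆ O`
consisting of elements with marginal gain with respect to `B` at most
`(τ/(K(1+2d)))·c(e)`, the set `Y = O ∖ X` satisfies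
`f(Y) ≥ f(O) − f(B) − dτ/(1+2d)`. -/
theorem last_bucket_residual_value_multi {V : Type*} [DecidableEq V] [Fintype V]
    (f : Finset V → ℝ)
    (hmono : ∀ S T : Finset V, S ⊆ T → f S ≤ f T)
    (hnonneg : ∀ S : Finset V, 0 ≤ f S)
    (hsub : ∀ S T : Finset V, S ⊆ T → ∀ e : V,
      f (S ∪ {e}) - f S ≥ f (T ∪ {e}) - f T)
    (d : ℕ) (hd : 1 ≤ d)
    (ca : Fin d → V → ℝ) (hca : ∀ a e, 0 < ca a e)
    (c : V → ℝ)
    (hcmax : ∀ e, c e =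
      Finset.univ.sup' (Finset.univ_nonempty_iff.mpr ⟨⟨0, hd⟩⟩) (fun a => ca a e))
    (K τ : ℝ) (hK : 0 < K) (hτ : 0 < τ)
    (O B X : Finset V)
    (hO : ∀ a : Fin d, ∑ e ∈ O, ca a e ≤ K)
    (hX : X ⊆ O)
    (hXe : ∀ e ∈ X, f (B ∪ {e}) - f B ≤ τ / (K * (1 + 2 * (d : ℝ))) * c e) :
    f (O \ X) ≥ f O - f B - (d : ℝ) * τ / (1 + 2 * (d : ℝ)) := by
  set Y := O \ X with hY
  have hd' : (1 : ℝ) ≤ (d : ℝ) := by exact_mod_cast hd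
  have hden : (0 : ℝ) < 1 + 2 * (d : ℝ) := by linarith
  -- Step 1: f O ≤ f (O ∪ B)
  have s1 : f O ≤ f (O ∪ B) := hmono _ _ Finset.subset_union_left
  -- O ∪ B = (Y ∪ B) ∪ X
  have hYX : Y ∪ X = O := by
    rw [hY]; exact Finset.sdiff_union_of_subset hX
  have hOB : O ∪ B = (Y ∪ B) ∪ X := by
    rw [← hYX]; ext x; simp; tauto
  -- Step 2
  have s2 : f ((Y ∪ B) ∪ X) ≤ f (Y ∪ B) + ∑ e ∈ X, (f (B ∪ {e}) - f B) :=
    sum_marg_bound f hsub B X (Y ∪ B) Finset.subset_union_right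
  -- Step 3: f (Y ∪ B) ≤ f Y + f B
  have s3 : f (Y ∪ B) ≤ f Y + f B := by
    have h := marg_mono f hsub B Y ∅ (Finset.empty_subset Y)
    simp only [Finset.empty_union] at h
    have := hnonneg (∅ : Finset V)
    linarith
  -- Step 4: sum of marginals bound
  have s4 : ∑ e ∈ X, (f (B ∪ {e}) - f B) ≤
      τ / (K * (1 + 2 * (d : ℝ))) * ∑ e ∈ X, c e := by
    rw [Finset.mul_sum]
    exact Finset.sum_le_sum hXe
  -- Step 5: ∑_{e∈X} c e ≤ d * K
  have hce : ∀ e, c e ≤ ∑ a : Fin d, ca a e := by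
    intro e
    rw [hcmax e]
    apply Finset.sup'_le
    intro a _
    exact Finset.single_le_sum (f := fun a => ca a e)
      (fun i _ => (hca i e).le) (Finset.mem_univ a)
  have s5 : ∑ e ∈ X, c e ≤ (d : ℝ) * K := by
    calc ∑ e ∈ X, c e ≤ ∑ e ∈ X, ∑ a : Fin d, ca a e :=
          Finset.sum_le_sum (fun e _ => hce e)
      _ = ∑ a : Fin d, ∑ e ∈ X, ca a e := Finset.sum_comm
      _ ≤ ∑ a : Fin d, ∑ e ∈ O, ca a e := by
          apply Finset.sum_le_sum
          intro a _
          exact Finset.sum_le_sum_of_subset_of_nonneg hX (fun i _ _ => (hca a i).le)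
      _ ≤ ∑ _a : Fin d, K := Finset.sum_le_sum (fun a _ => hO a)
      _ = (d : ℝ) * K := by simp [mul_comm]
  have hcoef : 0 ≤ τ / (K * (1 + 2 * (d : ℝ))) := by positivity
  have s6 : τ / (K * (1 + 2 * (d : ℝ))) * ∑ e ∈ X, c e ≤
      (d : ℝ) * τ / (1 + 2 * (d : ℝ)) := by
    have := mul_le_mul_of_nonneg_left s5 hcoef
    calc τ / (K * (1 + 2 * (d : ℝ))) * ∑ e ∈ X, c e
        ≤ τ / (K * (1 + 2 * (d : ℝ))) * ((d : ℝ) * K) := this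
      _ = (d : ℝ) * τ / (1 + 2 * (d : ℝ)) := by
          field_simp
  rw [hOB] at s1
  linarith
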